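/- arXiv:2203.12253 — 4 statements merged into one kernel-verified Lean document; each statement's English description precedes it below -/
import Mathlib

section
/- For every PL-formula α, the DELKh-formula Kh ¬α ↔ K¬α is valid; as a consequence, Kh ¬¬α ↔ Kα is also valid (the negative translation). -/
/-- Formulas of the propositional language `PL` over atoms `P`. -/
inductive PLForm (P : Type) : Type
  | atom : P → PLForm P
  | bot  : PLForm P
  | and  : PLForm P → PLForm P → PLForm P
  | or   : PLForm P → PLForm P → PLForm P
  | imp  : PLForm P → PLForm P → PLForm P

/-- `¬α` abbreviates `α → ⊥`. -/
def PLForm.neg {P : Type} (α : PLForm P) : PLForm P := α.imp .bot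

/-- The resolution space `S(α)`, realized as a type: `S(p)` and `S(⊥)` are
singletons, `S(α∨β)` is the disjoint union, `S(α∧β)` the product, and
`S(α→β)` the full function space. -/
def RS (P : Type) : PLForm P → Type
  | .atom _  => Unit
  | .bot     => Unit
  | .or a b  => RS P a ⊕ RS P b
  | .and a b => RS P a × RS P b
  | .imp a b => RS P a → RS P b

/-- An epistemic (information) model over atoms `P` with worlds `W`:
`W` is nonempty and `V` a valuation. -/
structure Model (P W : Type) where
  ne : Nonempty W
  V : W → Set P

/-- The actual resolutions `R(w,α) ⊆ S(α)` at a world `w`. -/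
def Res {P W : Type} (M : Model P W) (w : W) : (α : PLForm P) → Set (RS P α)
  | .atom p  => {_u : Unit | p ∈ M.V w}
  | .bot     => ∅
  | .or a b  => (Sum.inl '' Res M w a) ∪ (Sum.inr '' Res M w b)
  | .and a b => (Res M w a) ×ˢ (Res M w b)
  | .imp a b => {f : RS P a → RS P b | f '' Res M w a ⊆ Res M w b}

/-- Formulas of the dynamic epistemic language `DELKh`. -/
inductive DForm (P : Type) : Type
  | atom : P → DForm P
  | bot  : DForm P
  | and  : DForm P → DForm P → DForm P
  | or   : DForm P → DForm P → DForm P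
  | imp  : DForm P → DForm P → DForm P
  | K    : DForm P → DForm P
  | box  : DForm P → DForm P
  | kh   : PLForm P → DForm P

def DForm.neg {P : Type} (φ : DForm P) : DForm P := φ.imp .bot
def DForm.dia {P : Type} (φ : DForm P) : DForm P := (DForm.box φ.neg).neg
def DForm.biImp {P : Type} (φ ψ : DForm P) : DForm P := (φ.imp ψ).and (ψ.imp φ)

/-- Embedding of `PL` into `DELKh`. -/
def PLForm.toD {P : Type} : PLForm P → DForm P
  | .atom p  => .atom p
  | .bot     => .bot
  | .and a b => (toD a).and (toD b)
  | .or a b  => (toD a).or (toD b)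
  | .imp a b => (toD a).imp (toD b)

/-- The submodel of `M` determined by a nonempty set `s` of worlds,
with the restricted valuation. -/
def Model.restrict {P W : Type} (M : Model P W) (s : Set W) (h : s.Nonempty) :
    Model P s :=
  { ne := ⟨⟨h.choose, h.choose_spec⟩⟩, V := fun w => M.V w.1 }

/-- Satisfaction of `DELKh`-formulas at a pointed model `(M,w)`. -/
def Sat (P : Type) : (W : Type) → Model P W → W → DForm P → Prop
  | _, M, w, .atom p  => p ∈ M.V w
  | _, _, _, .bot     => False
  | W, M, w, .and a b => Sat P W M w a ∧ Sat P W M w b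
  | W, M, w, .or a b  => Sat P W M w a ∨ Sat P W M w b
  | W, M, w, .imp a b => Sat P W M w a → Sat P W M w b
  | W, M, _, .K φ     => ∀ v : W, Sat P W M v φ
  | W, M, w, .box φ   =>
      ∀ (s : Set W) (h : w ∈ s), Sat P s (M.restrict s ⟨w, h⟩) ⟨w, h⟩ φ
  | W, M, _, .kh α    => ∃ x : RS P α, ∀ v : W, x ∈ Res M v α

/-- A `DELKh`-formula is valid if it holds at every pointed model. -/
def Valid {P : Type} (φ : DForm P) : Prop :=
  ∀ (W : Type) (M : Model P W) (w : W), Sat P W M w φ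

/-- Semantic entailment from a set of `DELKh`-formulas. -/
def EntailsSet {P : Type} (Γ : Set (DForm P)) (φ : DForm P) : Prop :=
  ∀ (W : Type) (M : Model P W) (w : W),
    (∀ ψ ∈ Γ, Sat P W M w ψ) → Sat P W M w φ

/-- Classical satisfaction of `PL`-formulas at a pointed model. -/
def PLSat {P W : Type} (M : Model P W) (w : W) : PLForm P → Prop
  | .atom p  => p ∈ M.V w
  | .bot     => False
  | .and a b => PLSat M w a ∧ PLSat M w b
  | .or a b  => PLSat M w a ∨ PLSat M w b
  | .imp a b => PLSat M w a → PLSat M w b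

/-- Inquisitive support of `PL`-formulas at a state `s` of a model `M`. -/
def Support (P W : Type) (M : Model P W) : Set W → PLForm P → Prop
  | s, .atom p  => ∀ w ∈ s, p ∈ M.V w
  | s, .bot     => s = ∅
  | s, .and a b => Support P W M s a ∧ Support P W M s b
  | s, .or a b  => Support P W M s a ∨ Support P W M s b
  | s, .imp a b => ∀ t ⊆ s, Support P W M t a → Support P W M t b

instance RS.nonempty {P : Type} : ∀ α : PLForm P, Nonempty (RS P α)
  | .atom _  => ⟨()⟩
  | .bot     => ⟨()⟩
  | .or a _  => (RS.nonempty a).elim fun x => ⟨Sum.inl x⟩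
  | .and a b => (RS.nonempty a).elim fun x => (RS.nonempty b).elim fun y => ⟨(x, y)⟩
  | .imp a b => (RS.nonempty b).elim fun y => ⟨fun _ => y⟩

lemma res_ne_iff {P W : Type} (M : Model P W) (w : W) :
    ∀ α : PLForm P, (Res M w α).Nonempty ↔ PLSat M w α
  | .atom p  => ⟨fun ⟨_, h⟩ => h, fun h => ⟨(), h⟩⟩
  | .bot     => by simp [Res, PLSat]
  | .and a b => by
      rw [PLSat, ← res_ne_iff M w a, ← res_ne_iff M w b]
      exact ⟨fun ⟨⟨x, y⟩, hx, hy⟩ => ⟨⟨x, hx⟩, ⟨y, hy⟩⟩,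
        fun ⟨⟨x, hx⟩, ⟨y, hy⟩⟩ => ⟨(x, y), hx, hy⟩⟩
  | .or a b  => by
      rw [PLSat, ← res_ne_iff M w a, ← res_ne_iff M w b]
      constructor
      · rintro ⟨z, ⟨x, hx, rfl⟩ | ⟨y, hy, rfl⟩⟩
        · exact Or.inl ⟨x, hx⟩
        · exact Or.inr ⟨y, hy⟩
      · rintro (⟨x, hx⟩ | ⟨y, hy⟩)
        · exact ⟨Sum.inl x, Or.inl ⟨x, hx, rfl⟩⟩
        · exact ⟨Sum.inr y, Or.inr ⟨y, hy, rfl⟩⟩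
  | .imp a b => by
      rw [PLSat, ← res_ne_iff M w a, ← res_ne_iff M w b]
      constructor
      · rintro ⟨f, hf⟩ ⟨x, hx⟩
        exact ⟨f x, hf ⟨x, hx, rfl⟩⟩
      · intro h
        by_cases ha : (Res M w a).Nonempty
        · obtain ⟨y, hy⟩ := h ha
          exact ⟨fun _ => y, by rintro z ⟨x, _, rfl⟩; exact hy⟩
        · obtain ⟨f⟩ : Nonempty (RS P a → RS P b) := inferInstance
          refine ⟨f, ?_⟩
          rintro z ⟨x, hx, rfl⟩
          exact absurd ⟨x, hx⟩ ha

lemma sat_toD {P W : Type} (M : Model P W) (w : W) :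
    ∀ α : PLForm P, Sat P W M w α.toD ↔ PLSat M w α
  | .atom p  => Iff.rfl
  | .bot     => Iff.rfl
  | .and a b => by
      rw [PLForm.toD, Sat, PLSat, sat_toD M w a, sat_toD M w b]
  | .or a b  => by
      rw [PLForm.toD, Sat, PLSat, sat_toD M w a, sat_toD M w b]
  | .imp a b => by
      rw [PLForm.toD, Sat, PLSat, sat_toD M w a, sat_toD M w b]

lemma res_neg_mem {P W : Type} (M : Model P W) (w : W) (α : PLForm P)
    (f : RS P α.neg) : f ∈ Res M w α.neg ↔ ¬ PLSat M w α := by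
  show f '' Res M w α ⊆ (∅ : Set (RS P PLForm.bot)) ↔ _
  rw [← res_ne_iff M w α]
  constructor
  · rintro h ⟨x, hx⟩
    exact h ⟨x, hx, rfl⟩
  · rintro h z ⟨x, hx, rfl⟩
    exact h ⟨x, hx⟩

lemma kh_neg_iff {P W : Type} (M : Model P W) (w : W) (α : PLForm P) :
    Sat P W M w (DForm.kh α.neg) ↔ ∀ v : W, ¬ PLSat M v α := by
  rw [Sat]
  constructor
  · rintro ⟨f, hf⟩ v
    exact (res_neg_mem M v α f).1 (hf v)
  · intro h
    obtain ⟨f⟩ : Nonempty (RS P α.neg) := inferInstance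
    exact ⟨f, fun v => (res_neg_mem M v α f).2 (h v)⟩

/-- negative translation: `Kh ¬α ↔ K ¬α` is valid, and as a
consequence `Kh ¬¬α ↔ K α` is valid. -/
theorem negative_translation {P : Type} [Countable P] :
    (∀ α : PLForm P, Valid ((DForm.kh α.neg).biImp (DForm.K α.toD.neg))) ∧
    (∀ α : PLForm P, Valid ((DForm.kh α.neg.neg).biImp (DForm.K α.toD))) := by
  constructor
  · intro α W M w
    refine ⟨?_, ?_⟩ <;> intro h
    · intro v
      rw [DForm.neg, Sat, sat_toD M v α]
      exact (kh_neg_iff M w α).1 h v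
    · rw [kh_neg_iff]
      intro v
      have := h v
      rw [DForm.neg, Sat, sat_toD M v α] at this
      exact this
  · intro α W M w
    refine ⟨?_, ?_⟩ <;> intro h
    · intro v
      rw [sat_toD M v α]
      have := (kh_neg_iff M w α.neg).1 h v
      rw [← res_ne_iff M v α.neg] at this
      by_contra hα
      obtain ⟨f⟩ : Nonempty (RS P α.neg) := inferInstance
      exact this ⟨f, (res_neg_mem M v α f).2 hα⟩
    · rw [kh_neg_iff]
      intro v hneg
      rw [← res_ne_iff M v α.neg] at hneg
      obtain ⟨f, hf⟩ := hneg
      have := h v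
      rw [sat_toD M v α] at this
      exact (res_neg_mem M v α f).1 hf this
end

section
/- For any model M, any world w of M, and any PL-formulas α, β: M,w ⊨ Kh(α→β) if and only if for every submodel M' of M (every M' = ⟨W',V|_{W'}⟩ with ∅ ≠ W' ⊆ W), M' ⊨ Kh α implies M' ⊨ Kh β. -/
instance RS.instNonempty (P : Type) : ∀ α : PLForm P, Nonempty (RS P α)
  | .atom _ => ⟨()⟩
  | .bot => ⟨()⟩
  | .or a _ => (RS.instNonempty P a).map Sum.inl
  | .and a b => (RS.instNonempty P a).elim fun x => (RS.instNonempty P b).map (x, ·)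
  | .imp _ b => (RS.instNonempty P b).map fun y _ => y

namespace Model

variable {P W : Type} (M : Model P W)

theorem res_restrict (s : Set W) (h : s.Nonempty) :
    ∀ (α : PLForm P) (v : s), Res (M.restrict s h) v α = Res M v α
  | .atom _, _ => rfl
  | .bot, _ => rfl
  | .or a b, v => by simp only [Res, res_restrict s h a v, res_restrict s h b v]
  | .and a b, v => by simp only [Res, res_restrict s h a v, res_restrict s h b v]; rfl
  | .imp a b, v => by simp only [Res, res_restrict s h a v, res_restrict s h b v]

theorem sat_kh_restrict_iff (s : Set W) (h : s.Nonempty) (v : s) (α : PLForm P) :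
    Sat P s (M.restrict s h) v (.kh α) ↔ ∃ x : RS P α, ∀ u ∈ s, x ∈ Res M u α := by
  simp only [Sat, res_restrict, Subtype.forall]

theorem sat_kh_imp_iff (w : W) (α β : PLForm P) :
    Sat P W M w (.kh (α.imp β)) ↔
      ∀ x : RS P α, ∃ y : RS P β, ∀ v, x ∈ Res M v α → y ∈ Res M v β := by
  constructor
  · rintro ⟨f, hf⟩ x
    exact ⟨f x, fun v hx => hf v ⟨x, hx, rfl⟩⟩
  · intro H
    choose f hf using H
    exact ⟨f, fun v => by rintro _ ⟨x, hx, rfl⟩; exact hf x v hx⟩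

end Model

open Model

theorem kh_imp_via_submodels_general {P W : Type} (M : Model P W) (w : W)
    (α β : PLForm P) :
    Sat P W M w (.kh (α.imp β)) ↔
      ∀ (s : Set W) (h : s.Nonempty),
        (∀ v : s, Sat P s (M.restrict s h) v (.kh α)) →
        (∀ v : s, Sat P s (M.restrict s h) v (.kh β)) := by
  simp only [sat_kh_imp_iff, sat_kh_restrict_iff]
  constructor
  · rintro H s hs hα -
    obtain ⟨x, hx⟩ := hα ⟨_, hs.some_mem⟩
    obtain ⟨y, hy⟩ := H x
    exact ⟨y, fun v hv => hy v (hx v hv)⟩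
  · intro H x
    -- Test the hypothesis on the submodel of the worlds where `x` resolves `α`.
    by_cases hx : {v | x ∈ Res M v α}.Nonempty
    · exact H _ hx (fun _ => ⟨x, fun _ => id⟩) ⟨_, hx.some_mem⟩
    · exact ⟨Classical.arbitrary _, fun v hv => (hx ⟨v, hv⟩).elim⟩

/-- `M,w ⊨ Kh(α→β)` iff for every (nonempty) submodel `M'` of `M`,
`M' ⊨ Kh α` implies `M' ⊨ Kh β`. -/
theorem kh_imp_via_submodels {P W : Type} [Countable P] (M : Model P W) (w : W)
    (α β : PLForm P) :
    Sat P W M w (.kh (α.imp β)) ↔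
      ∀ (s : Set W) (h : s.Nonempty),
        (∀ v : s, Sat P s (M.restrict s h) v (.kh α)) →
        (∀ v : s, Sat P s (M.restrict s h) v (.kh β)) :=
  kh_imp_via_submodels_general M w α β
end

section
/- Persistence: for every PL-formula α, the DELKh-formula Kh α ↔ □Kh α is valid (once the agent knows how to resolve α, this persists under any informational update to a submodel). -/
theorem res_eq_of_V_eq {P W W' : Type} {M : Model P W} {M' : Model P W'} {w : W} {w' : W'}
    (h : M.V w = M'.V w') (α : PLForm P) : Res M w α = Res M' w' α := by
  induction α with
  | atom p => simp only [Res, h]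
  | bot => rfl
  | and a b iha ihb => exact congrArg₂ (· ×ˢ ·) iha ihb
  | or a b iha ihb => simp only [Res, iha, ihb]
  | imp a b iha ihb => simp only [Res, iha, ihb]

theorem sat_kh_restrict_iff {P W : Type} (M : Model P W) (s : Set W) (hs : s.Nonempty) (w : s)
    (α : PLForm P) :
    Sat P s (M.restrict s hs) w (.kh α) ↔ ∃ x : RS P α, ∀ v ∈ s, x ∈ Res M v α := by
  simp only [Sat, res_eq_of_V_eq (M := M.restrict s hs) (M' := M) rfl, Subtype.forall]

theorem kh_persistence_general {P : Type} (α : PLForm P) :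
    Valid ((DForm.kh α).biImp (DForm.box (.kh α))) := by
  intro W M w
  refine ⟨fun ⟨x, hx⟩ s hw => (sat_kh_restrict_iff M s _ _ α).2 ⟨x, fun v _ => hx v⟩,
    fun hbox => ?_⟩
  obtain ⟨x, hx⟩ := (sat_kh_restrict_iff M Set.univ _ _ α).1 (hbox Set.univ trivial)
  exact ⟨x, fun v => hx v trivial⟩

/-- persistence: `Kh α ↔ □Kh α` is valid. -/
theorem kh_persistence {P : Type} [Countable P] (α : PLForm P) :
    Valid ((DForm.kh α).biImp (DForm.box (.kh α))) :=
  kh_persistence_general α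
end

section
/- InqB = InqKhL: for every PL-formula α, α belongs to inquisitive logic InqB (α is supported by every state in every model) if and only if the DELKh-formula Kh α is valid (true at every pointed epistemic model). -/
/-!
A state supports `α` exactly when a single potential resolution of `α` is an actual resolution
at every world of the state. `Kh α` at a model says this for the state of all its worlds; every
nonempty state is the set of worlds of a submodel with the same resolutions, and the empty state
is harmless because resolution spaces are nonempty.
-/

theorem RS.nonempty_s19 {P : Type} : ∀ α : PLForm P, Nonempty (RS P α)
  | .atom _ | .bot => ⟨()⟩
  | .or a _ => (RS.nonempty_s19 a).map Sum.inl
  | .and a b => (RS.nonempty_s19 a).elim fun x => (RS.nonempty_s19 b).map (x, ·)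
  | .imp _ b => (RS.nonempty_s19 b).map fun y _ => y

section
variable {P W : Type} (M : Model P W)

theorem res_restrict (s : Set W) (hs : s.Nonempty) :
    ∀ (α : PLForm P) (v : s), Res (M.restrict s hs) v α = Res M v α
  | .atom _, _ | .bot, _ => rfl
  | .or a b, v | .imp a b, v => by
      simp only [Res, res_restrict s hs a v, res_restrict s hs b v]
  | .and a b, v => by
      simp only [Res, res_restrict s hs a v, res_restrict s hs b v]
      rfl

theorem support_iff_exists_forall_mem_res (α : PLForm P) (s : Set W) :
    Support P W M s α ↔ ∃ x : RS P α, ∀ w ∈ s, x ∈ Res M w α := by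
  induction α generalizing s with
  | atom p => exact ⟨fun h => ⟨(), h⟩, fun ⟨_, h⟩ => h⟩
  | bot =>
      simp only [Support, Res, Set.eq_empty_iff_forall_notMem, Set.mem_empty_iff_false]
      exact ⟨fun h => ⟨(), h⟩, fun ⟨_, h⟩ => h⟩
  | and a b iha ihb =>
      simp only [Support, Res, iha, ihb]
      constructor
      · rintro ⟨⟨x, hx⟩, ⟨y, hy⟩⟩
        exact ⟨(x, y), fun w hw => ⟨hx w hw, hy w hw⟩⟩
      · rintro ⟨⟨x, y⟩, h⟩
        exact ⟨⟨x, fun w hw => (h w hw).1⟩, ⟨y, fun w hw => (h w hw).2⟩⟩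
  | or a b iha ihb =>
      simp only [Support, Res, iha, ihb]
      constructor
      · rintro (⟨x, hx⟩ | ⟨y, hy⟩)
        · exact ⟨.inl x, fun w hw => .inl ⟨x, hx w hw, rfl⟩⟩
        · exact ⟨.inr y, fun w hw => .inr ⟨y, hy w hw, rfl⟩⟩
      · rintro ⟨x | y, h⟩
        · refine .inl ⟨x, fun w hw => ?_⟩
          obtain ⟨_, hx, ⟨⟩⟩ | ⟨_, _, ⟨⟩⟩ := h w hw
          exact hx
        · refine .inr ⟨y, fun w hw => ?_⟩
          obtain ⟨_, _, ⟨⟩⟩ | ⟨_, hy, ⟨⟩⟩ := h w hw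
          exact hy
  | imp a b iha ihb =>
      constructor
      · intro h
        -- Resolve `b` on the part of `s` where `x` resolves `a`, for each `x` separately.
        have hb : ∀ x : RS P a, ∃ y : RS P b, ∀ w ∈ s, x ∈ Res M w a → y ∈ Res M w b := by
          intro x
          obtain ⟨y, hy⟩ := (ihb _).1 <|
            h {w ∈ s | x ∈ Res M w a} (fun w hw => hw.1) ((iha _).2 ⟨x, fun w hw => hw.2⟩)
          exact ⟨y, fun w hw hx => hy w ⟨hw, hx⟩⟩
        choose f hf using hb
        exact ⟨f, fun w hw => Set.image_subset_iff.2 fun x hx => hf x w hw hx⟩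
      · rintro ⟨f, hf⟩ t hts hta
        obtain ⟨x, hx⟩ := (iha t).1 hta
        exact (ihb t).2 ⟨f x, fun w hw => hf w (hts hw) ⟨x, hx w hw, rfl⟩⟩

end

theorem inqB_eq_inqKhL_general {P : Type} (α : PLForm P) :
    (∀ (W : Type) (M : Model P W) (s : Set W), Support P W M s α) ↔
      Valid (DForm.kh α) := by
  simp only [support_iff_exists_forall_mem_res]
  constructor
  · intro h W M _
    obtain ⟨x, hx⟩ := h W M Set.univ
    exact ⟨x, fun v => hx v trivial⟩
  · intro h W M s
    rcases s.eq_empty_or_nonempty with rfl | hs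
    · exact (RS.nonempty_s19 α).elim fun x => ⟨x, by simp⟩
    · obtain ⟨x, hx⟩ := h s (M.restrict s hs) ⟨hs.choose, hs.choose_spec⟩
      exact ⟨x, fun w hw => res_restrict M s hs α ⟨w, hw⟩ ▸ hx ⟨w, hw⟩⟩

/-- `InqB = InqKhL`: `α` is supported by every state in every
model iff `Kh α` is valid. -/
theorem inqB_eq_inqKhL {P : Type} [Countable P] (α : PLForm P) :
    (∀ (W : Type) (M : Model P W) (s : Set W), Support P W M s α) ↔
      Valid (DForm.kh α) :=
  inqB_eq_inqKhL_general α
end
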